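/- arXiv:0904.4552 — 5 statements merged into one kernel-verified Lean document; each statement's English description precedes it below -/
import Mathlib

section
/- Suppose that for some n ≥ 1 and all tuples (k₁,…,kₙ) ∈ (ℤ/Nℤ)ⁿ one has P(w^{k₁})·⋯·P(w^{kₙ})·P(w^{−(k₁+⋯+kₙ)}) = P'(w^{k₁})·⋯·P'(w^{kₙ})·P'(w^{−(k₁+⋯+kₙ)}). Then for all (r₁,…,rₙ) ∈ (ℤ/Nℤ)ⁿ, Σ_{s ∈ ℤ/Nℤ} c(s)·c(s+r₁)·⋯·c(s+rₙ) = Σ_{s ∈ ℤ/Nℤ} c'(s)·c'(s+r₁)·⋯·c'(s+rₙ); that is, coincidence of the Fourier-side products implies coincidence of all (n+1)-point pattern frequencies. -/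
/-!
With `e(x) = exp (2πix)`, we have `w ^ m = e(-m/N)`, so `P (w ^ k)` is the discrete Fourier
transform `ĉ k`. Expanding `ĉ (-∑ kᵢ) = ∑ₛ c s ∏ᵢ e(kᵢ s / N)` and applying one-dimensional
Fourier inversion in each `kᵢ` gives
`∑ₖ (∏ᵢ ĉ kᵢ) ĉ (-∑ kᵢ) ∏ᵢ e(kᵢ rᵢ / N) = N ^ n ∑ₛ c s ∏ᵢ c (s + rᵢ)`,
so the pattern frequencies are determined by the Fourier-side products.
-/

open Finset ZMod

lemma AddChar.map_sum_eq_prod {ι A M : Type*} [AddCommMonoid A] [CommMonoid M]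
    (ψ : AddChar A M) (s : Finset ι) (f : ι → A) : ψ (∑ i ∈ s, f i) = ∏ i ∈ s, ψ (f i) :=
  map_prod ψ.toMonoidHom (Multiplicative.ofAdd ∘ f) s

def patternFrequency {G R ι : Type*} [Fintype G] [Add G] [CommSemiring R] [Fintype ι]
    (c : G → R) (r : ι → G) : R :=
  ∑ s, c s * ∏ i, c (s + r i)

section

variable {N : ℕ} [NeZero N]

lemma ZMod.sum_range_natCast {M : Type*} [AddCommMonoid M] (f : ZMod N → M) :
    ∑ j ∈ range N, f j = ∑ j, f j :=
  sum_nbij' (↑) ZMod.val (fun _ _ ↦ mem_univ _) (fun a _ ↦ mem_range.2 a.val_lt)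
    (fun _ hj ↦ ZMod.val_cast_of_lt (mem_range.1 hj)) (fun a _ ↦ ZMod.natCast_zmod_val a)
    (fun _ _ ↦ rfl)

lemma pow_eq_stdAddChar_neg_natCast {w : ℂ}
    (hw : w = Complex.exp (-(2 * Real.pi * Complex.I) / N)) (m : ℕ) :
    w ^ m = stdAddChar (-(m : ZMod N)) := by
  have h := stdAddChar_coe (N := N) (-(m : ℤ))
  push_cast at h
  rw [h, hw, ← Complex.exp_nat_mul]
  ring_nf

lemma sum_range_mul_pow_val_eq_dft {w : ℂ}
    (hw : w = Complex.exp (-(2 * Real.pi * Complex.I) / N)) (c : ZMod N → ℂ) (a : ZMod N) :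
    ∑ j ∈ range N, c j * (w ^ a.val) ^ j = 𝓕 c a := by
  rw [dft_apply, ← ZMod.sum_range_natCast]
  refine sum_congr rfl fun j _ ↦ ?_
  rw [← pow_mul, pow_eq_stdAddChar_neg_natCast hw, smul_eq_mul, mul_comm]
  push_cast
  rw [ZMod.natCast_zmod_val, mul_comm a]

lemma sum_dft_mul_stdAddChar (Φ : ZMod N → ℂ) (t : ZMod N) :
    ∑ κ, 𝓕 Φ κ * stdAddChar (κ * t) = N * Φ t := by
  have h := congr_fun (dft.symm_apply_apply Φ) t
  rw [invDFT_apply, smul_eq_mul, inv_mul_eq_iff_eq_mul₀ (NeZero.ne _)] at h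
  simpa only [smul_eq_mul, mul_comm (stdAddChar _)] using h

variable {ι : Type*} [Fintype ι]

lemma dft_neg_sum (c : ZMod N → ℂ) (k : ι → ZMod N) :
    𝓕 c (-∑ i, k i) = ∑ s, c s * ∏ i, stdAddChar (k i * s) := by
  rw [dft_apply]
  refine sum_congr rfl fun s _ ↦ ?_
  rw [smul_eq_mul, mul_comm, mul_neg, neg_neg, mul_sum, AddChar.map_sum_eq_prod]
  simp only [mul_comm s]

theorem sum_prod_dft_mul_stdAddChar_eq_patternFrequency [DecidableEq ι]
    (c : ZMod N → ℂ) (r : ι → ZMod N) :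
    ∑ k : ι → ZMod N, (∏ i, 𝓕 c (k i)) * 𝓕 c (-∑ i, k i) * ∏ i, stdAddChar (k i * r i)
      = N ^ Fintype.card ι * patternFrequency c r := by
  calc _ = ∑ s, c s * ∑ k : ι → ZMod N, ∏ i, 𝓕 c (k i) * stdAddChar (k i * (s + r i)) := by
        simp only [dft_neg_sum, mul_sum, sum_mul]
        rw [sum_comm]
        refine sum_congr rfl fun s _ ↦ sum_congr rfl fun k _ ↦ ?_
        simp only [mul_add, AddChar.map_add_eq_mul, prod_mul_distrib]
        ring
    _ = ∑ s, c s * ∏ i, (N * c (s + r i)) := by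
        simp only [← sum_dft_mul_stdAddChar, Fintype.prod_sum]
    _ = N ^ Fintype.card ι * patternFrequency c r := by
        simp only [patternFrequency, prod_mul_distrib, prod_const, card_univ, mul_sum]
        exact sum_congr rfl fun _ _ ↦ by ring

end

open Finset in
theorem fourier_products_eq_implies_pattern_frequencies_eq_general
    (N : ℕ) [NeZero N] (c c' : ZMod N → ℂ)
    (w : ℂ) (hw : w = Complex.exp (-(2 * Real.pi * Complex.I) / N))
    (P P' : ℂ → ℂ)
    (hP : ∀ z : ℂ, P z = ∑ j ∈ Finset.range N, c j * z ^ j)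
    (hP' : ∀ z : ℂ, P' z = ∑ j ∈ Finset.range N, c' j * z ^ j)
    (n : ℕ)
    (h : ∀ k : Fin n → ZMod N,
      (∏ i, P (w ^ (k i).val)) * P (w ^ (-(∑ i, k i)).val)
        = (∏ i, P' (w ^ (k i).val)) * P' (w ^ (-(∑ i, k i)).val)) :
    ∀ r : Fin n → ZMod N,
      ∑ s : ZMod N, c s * ∏ i, c (s + r i)
        = ∑ s : ZMod N, c' s * ∏ i, c' (s + r i) := by
  intro r
  simp only [hP, hP', sum_range_mul_pow_val_eq_dft hw] at h
  refine mul_left_cancel₀ (pow_ne_zero (Fintype.card (Fin n)) (NeZero.ne (N : ℂ))) ?_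
  rw [← patternFrequency, ← patternFrequency, ← sum_prod_dft_mul_stdAddChar_eq_patternFrequency,
    ← sum_prod_dft_mul_stdAddChar_eq_patternFrequency]
  simp only [h]

open Finset in
/-- If two weight functions `c, c' : ℤ/Nℤ → ℂ` have the property that the Fourier-side
products `P(w^{k₁})⋯P(w^{kₙ})·P(w^{−(k₁+⋯+kₙ)})` coincide for all tuples `(k₁,…,kₙ)`,
then all their (n+1)-point pattern frequencies coincide. Here `w = e^{-2πi/N}` and
`P(z) = Σ_{j=0}^{N-1} c(j) z^j`, `P'(z) = Σ_{j=0}^{N-1} c'(j) z^j`. -/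
theorem fourier_products_eq_implies_pattern_frequencies_eq
    (N : ℕ) [NeZero N] (c c' : ZMod N → ℂ)
    (w : ℂ) (hw : w = Complex.exp (-(2 * Real.pi * Complex.I) / N))
    (P P' : ℂ → ℂ)
    (hP : ∀ z : ℂ, P z = ∑ j ∈ Finset.range N, c j * z ^ j)
    (hP' : ∀ z : ℂ, P' z = ∑ j ∈ Finset.range N, c' j * z ^ j)
    (n : ℕ) (hn : 1 ≤ n)
    (h : ∀ k : Fin n → ZMod N,
      (∏ i, P (w ^ (k i).val)) * P (w ^ (-(∑ i, k i)).val)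
        = (∏ i, P' (w ^ (k i).val)) * P' (w ^ (-(∑ i, k i)).val)) :
    ∀ r : Fin n → ZMod N,
      ∑ s : ZMod N, c s * ∏ i, c (s + r i)
        = ∑ s : ZMod N, c' s * ∏ i, c' (s + r i) :=
  fourier_products_eq_implies_pattern_frequencies_eq_general N c c' w hw P P' hP hP' n h
end

section
/- For every k ∈ ℤ, P₁(ζᵏ)·P₁(ζ⁻ᵏ) = P₂(ζᵏ)·P₂(ζ⁻ᵏ). -/
/-!
If `wⁿ = 1`, then for `P(z) = ∑_{i<n} aᵢ zⁱ` the product `P(w) P(w⁻¹)` equals `∑ⱼ cⱼ wʲ`, where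
`cⱼ = ∑ᵢ aᵢ a_{i+j}` (indices mod `n`) is the cyclic autocorrelation of the coefficient vector.
The coefficient vectors of `P₁` and `P₂` have the same cyclic autocorrelation
`(5692, 5198, 4210, 3716, 4210, 5198)`.
-/

/-- The first weight polynomial, as a function ℂ → ℂ. -/
noncomputable def P1 : ℂ → ℂ := fun z => 11 + 25 * z + 42 * z ^ 2 + 45 * z ^ 3 + 31 * z ^ 4 + 14 * z ^ 5

/-- The second weight polynomial, as a function ℂ → ℂ. -/
noncomputable def P2 : ℂ → ℂ := fun z => 10 + 21 * z + 39 * z ^ 2 + 46 * z ^ 3 + 35 * z ^ 4 + 17 * z ^ 5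

open Finset

def evalCoeffs {R : Type*} [Ring R] {n : ℕ} (a : Fin n → ℤ) (z : R) : R :=
  ∑ i, (a i : R) * z ^ (i : ℕ)

def cyclicAutocorr {n : ℕ} (a : Fin n → ℤ) (j : Fin n) : ℤ := ∑ i, a i * a (i + j)

lemma pow_fin_add_mul_inv_pow {G : Type*} [CommGroupWithZero G] {n : ℕ} [NeZero n] {w : G}
    (hw : w ^ n = 1) (l j : Fin n) : w ^ ((l + j : Fin n) : ℕ) * w⁻¹ ^ (l : ℕ) = w ^ (j : ℕ) := by
  have hw0 : w ≠ 0 := ne_zero_pow (NeZero.ne n) (by simp [hw])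
  rw [Fin.val_add, ← pow_eq_pow_mod _ hw, pow_add, inv_pow, mul_right_comm,
    mul_inv_cancel₀ (pow_ne_zero _ hw0), one_mul]

theorem evalCoeffs_mul_evalCoeffs_inv {K : Type*} [Field K] {n : ℕ} [NeZero n] {w : K}
    (hw : w ^ n = 1) (a : Fin n → ℤ) :
    evalCoeffs a w * evalCoeffs a w⁻¹ = evalCoeffs (cyclicAutocorr a) w := by
  rw [evalCoeffs, evalCoeffs, sum_mul_sum, sum_comm]
  simp only [evalCoeffs, cyclicAutocorr, Int.cast_sum, Int.cast_mul, sum_mul]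
  conv_rhs => rw [sum_comm]
  refine sum_congr rfl fun l _ => ?_
  rw [← Equiv.sum_comp (Equiv.addLeft l)]
  refine sum_congr rfl fun j _ => ?_
  rw [Equiv.coe_addLeft]
  linear_combination (a l * a (l + j) : K) * pow_fin_add_mul_inv_pow hw l j

lemma P1_eq_evalCoeffs (z : ℂ) : P1 z = evalCoeffs ![11, 25, 42, 45, 31, 14] z := by
  simp [P1, evalCoeffs, Fin.sum_univ_six]

lemma P2_eq_evalCoeffs (z : ℂ) : P2 z = evalCoeffs ![10, 21, 39, 46, 35, 17] z := by
  simp [P2, evalCoeffs, Fin.sum_univ_six]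

lemma cyclicAutocorr_coeffs_P1_eq_P2 :
    cyclicAutocorr ![11, 25, 42, 45, 31, 14] = cyclicAutocorr ![10, 21, 39, 46, 35, 17] := by
  decide

/-- For every integer `k`, `P₁(ζᵏ)·P₁(ζ⁻ᵏ) = P₂(ζᵏ)·P₂(ζ⁻ᵏ)`, where `ζ` is a primitive
6th root of unity. -/
theorem two_fold_products_eq (ζ : ℂ) (hζ : IsPrimitiveRoot ζ 6) (k : ℤ) :
    P1 (ζ ^ k) * P1 (ζ ^ (-k)) = P2 (ζ ^ k) * P2 (ζ ^ (-k)) := by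
  have hw : (ζ ^ k) ^ 6 = 1 := by
    rw [← zpow_natCast, ← zpow_mul, mul_comm, zpow_mul, zpow_natCast, hζ.pow_eq_one, one_zpow]
  simp only [zpow_neg, P1_eq_evalCoeffs, P2_eq_evalCoeffs, evalCoeffs_mul_evalCoeffs_inv hw,
    cyclicAutocorr_coeffs_P1_eq_P2]
end

section
/- For all integers j, k, l, r, the five-fold products agree: P₁(ζʲ)·P₁(ζᵏ)·P₁(ζˡ)·P₁(ζʳ)·P₁(ζ^{−(j+k+l+r)}) = P₂(ζʲ)·P₂(ζᵏ)·P₂(ζˡ)·P₂(ζʳ)·P₂(ζ^{−(j+k+l+r)}). -/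
/-!
Both polynomials are divisible by `(z + 1)(z² + z + 1)`, so `Pᵢ(ζᵃ)` vanishes unless `a ≡ 0, ±1
(mod 6)`; on those residues `P₁(ζᵃ) = P₂(ζᵃ) uᵃ` with `u = P₁(ζ)/P₂(ζ)`, because `P₁(1) = P₂(1)` and
`|P₁(ζ)|² = |P₂(ζ)|² = 2964`. In a nonvanishing five-fold product the exponents are therefore
`0, ±1`, and their sum is a multiple of 6 of absolute value at most 5, hence zero: the powers of `u`
cancel.
-/

open Finset

theorem Finset.prod_zpow_eq_zpow_sum₀ {ι G₀ : Type*} [CommGroupWithZero G₀] {u : G₀} (hu : u ≠ 0)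
    (s : Finset ι) (e : ι → ℤ) : ∏ i ∈ s, u ^ e i = u ^ ∑ i ∈ s, e i := by
  classical
  induction s using Finset.induction_on with
  | empty => simp
  | insert i s hi ih => rw [prod_insert hi, sum_insert hi, ih, zpow_add₀ hu]

theorem zpow_eq_pow_val_intCast {G₀ : Type*} [GroupWithZero G₀] {x : G₀} {n : ℕ} [NeZero n]
    (h : x ^ n = 1) (j : ℤ) : x ^ j = x ^ (j : ZMod n).val := by
  have hx : x ≠ 0 := by
    rintro rfl
    simp [NeZero.ne n] at h
  have := zpow_eq_zpow_emod' j (x := Units.mk0 x hx) (n := n) (by ext; simp [h])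
  rw [← zpow_natCast, ZMod.val_intCast]
  simpa using congrArg Units.val this

namespace ZMod

theorem sum_valMinAbs_eq_zero {ι : Type*} {n : ℕ} {s : Finset ι} (hs : #s < n) {a : ι → ZMod n}
    (ha : ∑ i ∈ s, a i = 0) (h : ∀ i ∈ s, |(a i).valMinAbs| ≤ 1) :
    ∑ i ∈ s, (a i).valMinAbs = 0 := by
  apply Int.eq_zero_of_abs_lt_dvd (m := n)
  · rw [← ZMod.intCast_zmod_eq_zero_iff_dvd]
    push_cast [coe_valMinAbs]
    exact ha
  · calc |∑ i ∈ s, (a i).valMinAbs| ≤ ∑ i ∈ s, |(a i).valMinAbs| := abs_sum_le_sum_abs _ _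
      _ ≤ ∑ i ∈ s, 1 := sum_le_sum h
      _ < n := by simpa using hs

theorem eq_zero_or_eq_one_or_eq_neg_one_of_abs_valMinAbs_le_one {n : ℕ} {a : ZMod n}
    (ha : |a.valMinAbs| ≤ 1) : a = 0 ∨ a = 1 ∨ a = -1 := by
  rw [← a.coe_valMinAbs]
  obtain h | h | h : a.valMinAbs = 0 ∨ a.valMinAbs = 1 ∨ a.valMinAbs = -1 := by
    rcases abs_le.1 ha with ⟨h₁, h₂⟩
    omega
  all_goals simp [h]

theorem prod_eq_prod_of_eq_mul_zpow_valMinAbs {ι K : Type*} [CommGroupWithZero K] {n : ℕ}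
    {f g : ZMod n → K} {u : K} (hu : u ≠ 0) (hfg : ∀ a, f a = g a * u ^ a.valMinAbs)
    (hg : ∀ a, g a ≠ 0 → |a.valMinAbs| ≤ 1) {s : Finset ι} (hs : #s < n) {a : ι → ZMod n}
    (ha : ∑ i ∈ s, a i = 0) : ∏ i ∈ s, f (a i) = ∏ i ∈ s, g (a i) := by
  by_cases h : ∃ i ∈ s, g (a i) = 0
  · obtain ⟨i, hi, hgi⟩ := h
    rw [prod_eq_zero hi (by rw [hfg, hgi, zero_mul]), prod_eq_zero hi hgi]
  · push Not at h
    simp_rw [hfg, prod_mul_distrib, prod_zpow_eq_zpow_sum₀ hu,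
      sum_valMinAbs_eq_zero hs ha fun i hi ↦ hg _ (h i hi), zpow_zero, mul_one]

end ZMod

theorem IsPrimitiveRoot.sq_sub_add_one_eq_zero {R : Type*} [CommRing R] [IsDomain R] {ζ : R}
    (hζ : IsPrimitiveRoot ζ 6) : ζ ^ 2 - ζ + 1 = 0 := by
  simpa [Polynomial.cyclotomic_six] using hζ.isRoot_cyclotomic (by norm_num)

theorem P1_eq_mul (z : ℂ) : P1 z = (z + 1) * (z ^ 2 + z + 1) * (14 * z ^ 2 + 3 * z + 11) := by
  unfold P1; ring

theorem P2_eq_mul (z : ℂ) : P2 z = (z + 1) * (z ^ 2 + z + 1) * (17 * z ^ 2 + z + 10) := by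
  unfold P2; ring

section SixthRoots

variable {z : ℂ} (hz : z ^ 2 - z + 1 = 0)
include hz

theorem P1_eq_of_sq_sub_add_one : P1 z = -62 + 22 * z := by
  unfold P1; linear_combination (14 * z ^ 3 + 45 * z ^ 2 + 76 * z + 73) * hz

theorem P2_eq_of_sq_sub_add_one : P2 z = -58 + 8 * z := by
  unfold P2; linear_combination (17 * z ^ 3 + 52 * z ^ 2 + 81 * z + 68) * hz

theorem P1_ne_zero_of_sq_sub_add_one : P1 z ≠ 0 := by
  rw [P1_eq_of_sq_sub_add_one hz]
  intro h
  obtain rfl : z = 31 / 11 := by linear_combination h / 22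
  norm_num at hz

theorem P2_ne_zero_of_sq_sub_add_one : P2 z ≠ 0 := by
  rw [P2_eq_of_sq_sub_add_one hz]
  intro h
  obtain rfl : z = 29 / 4 := by linear_combination h / 8
  norm_num at hz

theorem P1_mul_P1_one_sub_eq_of_sq_sub_add_one : P1 z * P1 (1 - z) = P2 z * P2 (1 - z) := by
  have hz' : (1 - z) ^ 2 - (1 - z) + 1 = 0 := by linear_combination hz
  rw [P1_eq_of_sq_sub_add_one hz, P1_eq_of_sq_sub_add_one hz', P2_eq_of_sq_sub_add_one hz,
    P2_eq_of_sq_sub_add_one hz']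
  linear_combination (-420) * hz

end SixthRoots

section PrimitiveSixthRoot

variable {ζ : ℂ} (hζ : IsPrimitiveRoot ζ 6)
include hζ

theorem IsPrimitiveRoot.pow_val_add_one_mul_sq_add_add_one_eq_zero (a : ZMod 6)
    (ha : 1 < |a.valMinAbs|) : (ζ ^ a.val + 1) * ((ζ ^ a.val) ^ 2 + ζ ^ a.val + 1) = 0 := by
  have hq := hζ.sq_sub_add_one_eq_zero
  fin_cases a
  · exact absurd ha (by decide)
  · exact absurd ha (by decide)
  · show (ζ ^ 2 + 1) * ((ζ ^ 2) ^ 2 + ζ ^ 2 + 1) = 0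
    linear_combination (ζ ^ 2 + 1) * (ζ ^ 2 + ζ + 1) * hq
  · show (ζ ^ 3 + 1) * ((ζ ^ 3) ^ 2 + ζ ^ 3 + 1) = 0
    linear_combination (ζ + 1) * ((ζ ^ 3) ^ 2 + ζ ^ 3 + 1) * hq
  · show (ζ ^ 4 + 1) * ((ζ ^ 4) ^ 2 + ζ ^ 4 + 1) = 0
    linear_combination (ζ ^ 4 + 1) * (ζ ^ 2 + ζ + 1) * (ζ ^ 4 - ζ ^ 2 + 1) * hq
  · exact absurd ha (by decide)

theorem IsPrimitiveRoot.P1_pow_val_eq (a : ZMod 6) :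
    P1 (ζ ^ a.val) = P2 (ζ ^ a.val) * (P1 ζ / P2 ζ) ^ a.valMinAbs := by
  have hq := hζ.sq_sub_add_one_eq_zero
  have h1 := P1_ne_zero_of_sq_sub_add_one hq
  have h2 := P2_ne_zero_of_sq_sub_add_one hq
  rcases le_or_gt |a.valMinAbs| 1 with ha | ha
  · obtain rfl | rfl | rfl := ZMod.eq_zero_or_eq_one_or_eq_neg_one_of_abs_valMinAbs_le_one ha
    · norm_num [P1, P2]
    · rw [show (1 : ZMod 6).val = 1 from rfl, show (1 : ZMod 6).valMinAbs = 1 by decide]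
      field_simp
    · have h5 : ζ ^ 5 = 1 - ζ := by linear_combination (ζ ^ 3 + ζ ^ 2 - 1) * hq
      rw [show (-1 : ZMod 6).val = 5 by decide, show (-1 : ZMod 6).valMinAbs = -1 by decide, h5,
        zpow_neg_one, inv_div, mul_div_assoc', eq_div_iff h1]
      linear_combination P1_mul_P1_one_sub_eq_of_sq_sub_add_one hq
  · rw [P1_eq_mul, P2_eq_mul, hζ.pow_val_add_one_mul_sq_add_add_one_eq_zero a ha]
    ring

theorem IsPrimitiveRoot.abs_valMinAbs_le_one_of_P2_pow_val_ne_zero (a : ZMod 6)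
    (h : P2 (ζ ^ a.val) ≠ 0) : |a.valMinAbs| ≤ 1 := by
  contrapose! h
  rw [P2_eq_mul, hζ.pow_val_add_one_mul_sq_add_add_one_eq_zero a h, zero_mul]

end PrimitiveSixthRoot

/-- For all integers j, k, l, r the five-fold products of values of P₁ and of P₂ at the
corresponding powers of a primitive 6th root of unity ζ agree. -/
theorem five_fold_products_eq (ζ : ℂ) (hζ : IsPrimitiveRoot ζ 6) (j k l r : ℤ) :
    P1 (ζ ^ j) * P1 (ζ ^ k) * P1 (ζ ^ l) * P1 (ζ ^ r) * P1 (ζ ^ (-(j + k + l + r)))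
      = P2 (ζ ^ j) * P2 (ζ ^ k) * P2 (ζ ^ l) * P2 (ζ ^ r) * P2 (ζ ^ (-(j + k + l + r))) := by
  have hq := hζ.sq_sub_add_one_eq_zero
  have key := ZMod.prod_eq_prod_of_eq_mul_zpow_valMinAbs
    (div_ne_zero (P1_ne_zero_of_sq_sub_add_one hq) (P2_ne_zero_of_sq_sub_add_one hq))
    hζ.P1_pow_val_eq hζ.abs_valMinAbs_le_one_of_P2_pow_val_ne_zero (s := univ) (by simp)
    (a := fun i : Fin 5 ↦ ((![j, k, l, r, -(j + k + l + r)] i : ℤ) : ZMod 6))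
    (by simp [Fin.sum_univ_five])
  simpa [Fin.prod_univ_five, ← zpow_eq_pow_val_intCast hζ.pow_eq_one] using key
end

section
/- L₀ is a subgroup of 𝓛, and the quotient group 𝓛/L₀ is isomorphic to ℤ/6ℤ. -/
/-!
With `h = (½, ½, ½, ½)` we have `2h ∈ ℤ⁴`, so `𝓛 = ℤ⁴ ∪ (h + ℤ⁴)` is the subgroup `ℤ⁴ + ℤh`.
Modulo `L₀` every element of `𝓛` is a multiple of `h`: an integral vector `k` with coordinate
sum `s` satisfies `k - 2s•h ∈ L₀`, since subtracting `2s•h = (s, s, s, s)` changes the sum by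
`-4s ≡ -s (mod 3)`. Finally `n•h ∈ L₀` iff `n = 2j` with `3 ∣ 4j`, i.e. iff `6 ∣ n`, so `𝓛/L₀`
is cyclic of order `6`, generated by the class of `h`.
-/

open AddSubgroup

noncomputable def QuotientAddGroup.addEquivZModOfGenerator {G : Type*} [AddCommGroup G]
    (N : AddSubgroup G) (g : G) (m : ℕ) (hgen : ∀ x, ∃ n : ℤ, x - n • g ∈ N)
    (hord : ∀ n : ℤ, n • g ∈ N ↔ (m : ℤ) ∣ n) : G ⧸ N ≃+ ZMod m :=
  let ψ : ℤ →+ G ⧸ N := (QuotientAddGroup.mk' N).comp (zmultiplesHom G g)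
  have hker : ψ.ker = zmultiples (m : ℤ) := by
    ext n
    rw [AddMonoidHom.mem_ker, Int.mem_zmultiples_iff, ← hord]
    exact QuotientAddGroup.eq_zero_iff _
  have hsurj : Function.Surjective ψ := by
    rintro ⟨x⟩
    obtain ⟨n, hn⟩ := hgen x
    exact ⟨n, QuotientAddGroup.eq_iff_sub_mem.2 (by simpa using neg_mem hn)⟩
  (QuotientAddGroup.quotientKerEquivOfSurjective ψ hsurj).symm.trans <|
    (QuotientAddGroup.quotientAddEquivOfEq hker).trans (Int.quotientZMultiplesNatEquivZMod m)

theorem AddSubgroup.mem_sup_zmultiples_iff_of_two_zsmul_mem {G : Type*} [AddCommGroup G]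
    {H : AddSubgroup G} {g x : G} (hg : (2 : ℤ) • g ∈ H) :
    x ∈ H ⊔ zmultiples g ↔ x ∈ H ∨ x - g ∈ H := by
  constructor
  · rw [mem_sup]
    rintro ⟨y, hy, z, hz, rfl⟩
    obtain ⟨n, rfl⟩ := mem_zmultiples_iff.mp hz
    have h2j (j : ℤ) : (2 * j) • g ∈ H := by
      rw [mul_comm, mul_zsmul]
      exact zsmul_mem hg j
    obtain ⟨j, rfl | rfl⟩ := Int.even_or_odd' n
    · exact .inl (add_mem hy (h2j j))
    · right
      rw [add_zsmul, one_zsmul, ← add_assoc, add_sub_cancel_right]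
      exact add_mem hy (h2j j)
  · rintro (hx | hx)
    · exact mem_sup_left hx
    · simpa using add_mem (mem_sup_left hx) (mem_sup_right (mem_zmultiples g))

theorem Rat.exists_even_intCast_eq_two_mul_iff (q : ℚ) :
    (∃ m : ℤ, Even m ∧ (m : ℚ) = 2 * q) ↔ ∃ k : ℤ, (k : ℚ) = q := by
  constructor
  · rintro ⟨_, ⟨k, rfl⟩, hk⟩
    exact ⟨k, by push_cast at hk; linarith⟩
  · rintro ⟨k, rfl⟩
    exact ⟨2 * k, even_two_mul k, by push_cast; ring⟩

theorem Rat.exists_odd_intCast_eq_two_mul_iff (q : ℚ) :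
    (∃ m : ℤ, Odd m ∧ (m : ℚ) = 2 * q) ↔ ∃ k : ℤ, (k : ℚ) = q - 1 / 2 := by
  constructor
  · rintro ⟨_, ⟨k, rfl⟩, hk⟩
    exact ⟨k, by push_cast at hk; linarith⟩
  · rintro ⟨k, hk⟩
    exact ⟨2 * k + 1, odd_two_mul_add_one k, by push_cast; rw [hk]; ring⟩

section IntPoints

variable (ι : Type*)

def intCastPi : (ι → ℤ) →+ (ι → ℚ) := AddMonoidHom.compLeft (Int.castAddHom ℚ) ι

@[simp]
theorem intCastPi_apply (k : ι → ℤ) (i : ι) : intCastPi ι k i = k i := rfl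

def intPoints : AddSubgroup (ι → ℚ) := (intCastPi ι).range

def halfOnes : ι → ℚ := fun _ => 1 / 2

-- `D_n^*` for `n = card ι`; for `n = 4` it is the `F₄` root lattice.
def dualDLattice : AddSubgroup (ι → ℚ) := intPoints ι ⊔ zmultiples (halfOnes ι)

variable {ι}

theorem mem_intPoints {v : ι → ℚ} : v ∈ intPoints ι ↔ ∀ i, ∃ k : ℤ, (k : ℚ) = v i := by
  simp [intPoints, intCastPi, funext_iff, Classical.skolem]

theorem two_zsmul_halfOnes_mem_intPoints : (2 : ℤ) • halfOnes ι ∈ intPoints ι :=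
  mem_intPoints.2 fun _ => ⟨1, by norm_num [halfOnes]⟩

theorem coe_dualDLattice : (dualDLattice ι : Set (ι → ℚ)) =
    {v | (∀ i, ∃ m : ℤ, (m : ℚ) = 2 * v i) ∧
      ((∀ i, ∃ m : ℤ, Even m ∧ (m : ℚ) = 2 * v i) ∨
       (∀ i, ∃ m : ℤ, Odd m ∧ (m : ℚ) = 2 * v i))} := by
  ext v
  have hdrop : ((∀ i, ∃ m : ℤ, Even m ∧ (m : ℚ) = 2 * v i) ∨
      (∀ i, ∃ m : ℤ, Odd m ∧ (m : ℚ) = 2 * v i)) → ∀ i, ∃ m : ℤ, (m : ℚ) = 2 * v i := by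
    rintro (h | h) i <;> obtain ⟨m, -, hm⟩ := h i <;> exact ⟨m, hm⟩
  rw [Set.mem_ofPred_eq, and_iff_right_of_imp hdrop, SetLike.mem_coe, dualDLattice,
    mem_sup_zmultiples_iff_of_two_zsmul_mem two_zsmul_halfOnes_mem_intPoints,
    mem_intPoints, mem_intPoints]
  simp only [Rat.exists_even_intCast_eq_two_mul_iff, Rat.exists_odd_intCast_eq_two_mul_iff,
    Pi.sub_apply, halfOnes]

end IntPoints

def intSumDvdThree : AddSubgroup (Fin 4 → ℤ) where
  carrier := {k | 3 ∣ k 0 + k 1 + k 2 + k 3}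
  zero_mem' := by simp
  add_mem' {a b} ha hb := by
    simp only [Set.mem_ofPred_eq, Pi.add_apply] at *
    omega
  neg_mem' {a} ha := by
    simp only [Set.mem_ofPred_eq, Pi.neg_apply] at *
    omega

def latticeL0 : AddSubgroup (Fin 4 → ℚ) := intSumDvdThree.map (intCastPi (Fin 4))

theorem coe_latticeL0 : (latticeL0 : Set (Fin 4 → ℚ)) =
    {v | ∃ k : Fin 4 → ℤ, (∀ i, (k i : ℚ) = v i) ∧ (3 : ℤ) ∣ (k 0 + k 1 + k 2 + k 3)} := by
  ext v
  simp [latticeL0, intCastPi, intSumDvdThree, funext_iff, and_comm]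

theorem latticeL0_le_dualDLattice : latticeL0 ≤ dualDLattice (Fin 4) :=
  (map_le_range _ _).trans le_sup_left

theorem zsmul_halfOnes_mem_latticeL0_iff (n : ℤ) :
    n • halfOnes (Fin 4) ∈ latticeL0 ↔ (6 : ℤ) ∣ n := by
  constructor
  · rintro ⟨k, hk3, hk⟩
    have h2k (i : Fin 4) : 2 * k i = n := by
      have := congrFun hk i
      simp only [intCastPi_apply, Pi.smul_apply, halfOnes, zsmul_eq_mul] at this
      exact_mod_cast (by push_cast; linarith : ((2 * k i : ℤ) : ℚ) = n)
    have := h2k 0; have := h2k 1; have := h2k 2; have := h2k 3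
    change 3 ∣ k 0 + k 1 + k 2 + k 3 at hk3
    omega
  · rintro ⟨j, rfl⟩
    refine ⟨fun _ => 3 * j, ?_, ?_⟩
    · change 3 ∣ 3 * j + 3 * j + 3 * j + 3 * j
      omega
    · ext i
      simp only [intCastPi_apply, Pi.smul_apply, halfOnes, zsmul_eq_mul]
      push_cast
      ring

theorem intCastPi_sub_zsmul_halfOnes_mem_latticeL0 (k : Fin 4 → ℤ) :
    intCastPi (Fin 4) k - (2 * (k 0 + k 1 + k 2 + k 3)) • halfOnes (Fin 4) ∈ latticeL0 := by
  refine ⟨k - fun _ => k 0 + k 1 + k 2 + k 3, ?_, ?_⟩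
  · change 3 ∣ (k 0 - _) + (k 1 - _) + (k 2 - _) + (k 3 - _)
    beta_reduce
    omega
  · ext i
    simp only [intCastPi_apply, Pi.sub_apply, Pi.smul_apply, halfOnes]
    push_cast
    ring

theorem exists_sub_zsmul_halfOnes_mem_latticeL0 (v : dualDLattice (Fin 4)) :
    ∃ n : ℤ, (v : Fin 4 → ℚ) - n • halfOnes (Fin 4) ∈ latticeL0 := by
  obtain ⟨v, hv⟩ := v
  obtain ⟨_, ⟨k, rfl⟩, _, hz, rfl⟩ := mem_sup.1 hv
  obtain ⟨j, rfl⟩ := mem_zmultiples_iff.1 hz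
  refine ⟨j + 2 * (k 0 + k 1 + k 2 + k 3), ?_⟩
  convert intCastPi_sub_zsmul_halfOnes_mem_latticeL0 k using 1
  simp only [add_zsmul]
  abel

/-- The F₄ root lattice 𝓛 (vectors in ℚ⁴ whose doubles are integers, all even or all
odd) is an additive subgroup of ℚ⁴, the set L₀ of integral vectors with coordinate sum
divisible by 3 is an additive subgroup contained in 𝓛, and the quotient 𝓛/L₀ is
isomorphic to ℤ/6ℤ. -/
theorem F4_mod_L0_iso_Zmod6 :
    ∃ L L0 : AddSubgroup (Fin 4 → ℚ),
      (L : Set (Fin 4 → ℚ)) =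
        {v | (∀ i, ∃ m : ℤ, (m : ℚ) = 2 * v i) ∧
          ((∀ i, ∃ m : ℤ, Even m ∧ (m : ℚ) = 2 * v i) ∨
           (∀ i, ∃ m : ℤ, Odd m ∧ (m : ℚ) = 2 * v i))} ∧
      (L0 : Set (Fin 4 → ℚ)) =
        {v | ∃ k : Fin 4 → ℤ, (∀ i, (k i : ℚ) = v i) ∧
          (3 : ℤ) ∣ (k 0 + k 1 + k 2 + k 3)} ∧
      L0 ≤ L ∧
      Nonempty ((L ⧸ L0.addSubgroupOf L) ≃+ ZMod 6) := by
  refine ⟨dualDLattice (Fin 4), latticeL0, coe_dualDLattice, coe_latticeL0,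
    latticeL0_le_dualDLattice, ⟨QuotientAddGroup.addEquivZModOfGenerator _
      ⟨halfOnes (Fin 4), mem_sup_right (mem_zmultiples _)⟩ 6 (fun v => ?_) (fun n => ?_)⟩⟩
  · simpa [mem_addSubgroupOf] using exists_sub_zsmul_halfOnes_mem_latticeL0 v
  · simpa [mem_addSubgroupOf] using zsmul_halfOnes_mem_latticeL0_iff n
end

section
/- For every n ≤ 4 and all integers z₁,…,zₙ, there is a common limit ℓ ∈ ℝ such that both averaged (n+1)-point pattern counts (1/(2R+1))·Σ_{x ∈ ℤ, |x| ≤ R} c₁(x mod 6)·c₁((x+z₁) mod 6)·⋯·c₁((x+zₙ) mod 6) and (1/(2R+1))·Σ_{x ∈ ℤ, |x| ≤ R} c₂(x mod 6)·c₂((x+z₁) mod 6)·⋯·c₂((x+zₙ) mod 6) converge to ℓ as R → ∞; that is, the two distinct weighted periodic point sets on ℤ determined by c₁ and c₂ have identical 2-, 3-, 4- and 5-point correlations. -/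
/-!
Each pattern count sums the 6-periodic function `x ↦ c(x) ∏ᵢ c(x + zᵢ)` over `[-R, R]`, so its
averages converge to the mean over one period, the finite correlation
`∑_{r ∈ ℤ/6} c(r) ∏ᵢ c(r + zᵢ)` divided by `6`. For `n ≤ 4` the finite correlations of `c1` and
`c2` coincide for every shift vector, which is a finite check over `(ℤ/6)ⁿ`.
-/

open Filter in
/-- The first weight function on ℤ/6ℤ, with values 11, 25, 42, 45, 31, 14. -/
def c1 : ZMod 6 → ℤ := ![11, 25, 42, 45, 31, 14]

/-- The second weight function on ℤ/6ℤ, with values 10, 21, 39, 46, 35, 17. -/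
def c2 : ZMod 6 → ℤ := ![10, 21, 39, 46, 35, 17]

open Filter Finset Topology

section Periodic

variable {m : ℕ} [NeZero m]

theorem sum_Ico_intCast_zmod {M : Type*} [AddCommMonoid M] (F : ZMod m → M) (a : ℤ) :
    ∑ x ∈ Ico a (a + m), F x = ∑ r, F r := by
  refine sum_nbij' (fun x => (x : ZMod m)) (fun r => a + (r - a : ZMod m).val)
    (fun _ _ => mem_univ _) (fun r _ => ?_) (fun x hx => ?_) (fun r _ => ?_) (fun _ _ => rfl)
  · have := ZMod.val_lt (r - a : ZMod m)
    rw [mem_Ico]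
    omega
  · rw [mem_Ico] at hx
    rw [← Int.cast_sub, ZMod.val_intCast, Int.emod_eq_of_lt (by omega) (by omega)]
    omega
  · simp only [Int.cast_add, Int.cast_natCast, ZMod.natCast_zmod_val]
    ring

theorem sum_Icc_neg_add_period {M : Type*} [AddCommMonoid M] (F : ZMod m → M) (R : ℕ) :
    ∑ x ∈ Icc (-((R + m : ℕ) : ℤ)) (R + m : ℕ), F x
      = ∑ x ∈ Icc (-(R : ℤ)) R, F x + 2 • ∑ r, F r := by
  have hsplit : Icc (-((R + m : ℕ) : ℤ)) (R + m : ℕ)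
      = Ico (-((R + m : ℕ) : ℤ)) (-((R + m : ℕ) : ℤ) + m)
        ∪ (Icc (-(R : ℤ)) R ∪ Ico ((R : ℤ) + 1) ((R : ℤ) + 1 + m)) := by
    ext x
    simp only [mem_Icc, mem_Ico, mem_union]
    omega
  have hdisj₁ : Disjoint (Icc (-(R : ℤ)) R) (Ico ((R : ℤ) + 1) ((R : ℤ) + 1 + m)) := by
    simp only [disjoint_left, mem_Icc, mem_Ico]
    omega
  have hdisj₂ : Disjoint (Ico (-((R + m : ℕ) : ℤ)) (-((R + m : ℕ) : ℤ) + m))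
      (Icc (-(R : ℤ)) R ∪ Ico ((R : ℤ) + 1) ((R : ℤ) + 1 + m)) := by
    simp only [disjoint_left, mem_Icc, mem_Ico, mem_union]
    omega
  rw [hsplit, sum_union hdisj₂, sum_union hdisj₁, sum_Ico_intCast_zmod, sum_Ico_intCast_zmod,
    two_nsmul]
  abel

theorem tendsto_avg_sum_Icc_zmod (F : ZMod m → ℝ) :
    Tendsto (fun R : ℕ => 1 / (2 * (R : ℝ) + 1) * ∑ x ∈ Icc (-(R : ℤ)) R, F x)
      atTop (𝓝 ((∑ r, F r) / m)) := by
  set μ := (∑ r, F r) / m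
  set E : ℕ → ℝ := fun R => ∑ x ∈ Icc (-(R : ℤ)) R, F x - (2 * R + 1) * μ with hE
  have hm : (m : ℝ) ≠ 0 := NeZero.ne _
  have hperiodic : Function.Periodic E m := fun R => by
    simp only [hE, μ, sum_Icc_neg_add_period, nsmul_eq_mul]
    push_cast
    field_simp
    ring
  set C := ∑ j ∈ range m, |E j|
  have hbound : ∀ R, |E R| ≤ C := fun R => by
    rw [← hperiodic.map_mod_nat]
    exact single_le_sum (f := fun j => |E j|) (fun _ _ => abs_nonneg _)
      (mem_range.mpr (Nat.mod_lt _ (NeZero.pos m)))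
  have hdenom : Tendsto (fun R : ℕ => 2 * (R : ℝ) + 1) atTop atTop :=
    tendsto_atTop_add_const_right _ _ <|
      (tendsto_natCast_atTop_atTop (R := ℝ)).const_mul_atTop two_pos
  have herror : Tendsto (fun R : ℕ => E R / (2 * R + 1)) atTop (𝓝 0) := by
    refine squeeze_zero_norm (a := fun R : ℕ => C / (2 * (R : ℝ) + 1)) (fun R => ?_)
      ((tendsto_const_nhds (x := C)).div_atTop hdenom)
    have hpos : (0 : ℝ) < 2 * R + 1 := by positivity
    rw [Real.norm_eq_abs, abs_div, abs_of_pos hpos]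
    exact div_le_div_of_nonneg_right (hbound R) hpos.le
  have hlim := (tendsto_const_nhds (x := μ)).add herror
  rw [add_zero] at hlim
  refine hlim.congr fun R => ?_
  simp only [hE]
  field_simp
  ring

end Periodic

def correlation {m n : ℕ} [NeZero m] (c : ZMod m → ℤ) (w : Fin n → ZMod m) : ℤ :=
  ∑ r : ZMod m, c r * ∏ i, c (r + w i)

theorem tendsto_avg_patternCount {m n : ℕ} [NeZero m] (c : ZMod m → ℤ) (z : Fin n → ℤ) :
    Tendsto (fun R : ℕ => (1 / (2 * (R : ℝ) + 1)) *
        ∑ x ∈ Icc (-(R : ℤ)) (R : ℤ), ((c (x : ZMod m) : ℤ) : ℝ) *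
          ∏ i, ((c ((x + z i : ℤ) : ZMod m) : ℤ) : ℝ))
      atTop (𝓝 (correlation c (fun i => (z i : ZMod m)) / m)) := by
  convert tendsto_avg_sum_Icc_zmod (fun r => (c r : ℝ) * ∏ i, (c (r + z i) : ℝ)) using 3
  · simp only [Int.cast_add]
  · simp [correlation]

theorem correlation_c1_eq_c2 {n : ℕ} (hn : n ≤ 4) (w : Fin n → ZMod 6) :
    correlation c1 w = correlation c2 w := by
  revert n
  decide +kernel

open Filter in
/-- The two distinct weighted periodic point sets on ℤ determined by `c1` and `c2`
(the integer `x` carries weight `cᵢ(x mod 6)`) have identical 2-, 3-, 4- and 5-point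
correlations: for every `n ≤ 4` the averaged `(n+1)`-point pattern counts of the two
systems converge to a common limit. -/
theorem correlations_up_to_five_agree (n : ℕ) (hn : n ≤ 4) (z : Fin n → ℤ) :
    ∃ l : ℝ,
      Tendsto
        (fun R : ℕ => (1 / (2 * (R : ℝ) + 1)) *
          ∑ x ∈ Finset.Icc (-(R : ℤ)) (R : ℤ),
            ((c1 (x : ZMod 6) : ℤ) : ℝ) * ∏ i, ((c1 ((x + z i : ℤ) : ZMod 6) : ℤ) : ℝ))
        atTop (nhds l) ∧
      Tendsto
        (fun R : ℕ => (1 / (2 * (R : ℝ) + 1)) *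
          ∑ x ∈ Finset.Icc (-(R : ℤ)) (R : ℤ),
            ((c2 (x : ZMod 6) : ℤ) : ℝ) * ∏ i, ((c2 ((x + z i : ℤ) : ZMod 6) : ℤ) : ℝ))
        atTop (nhds l) := by
  refine ⟨_, tendsto_avg_patternCount c1 z, ?_⟩
  rw [correlation_c1_eq_c2 hn]
  exact tendsto_avg_patternCount c2 z
end
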